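/- arXiv:1704.05370 — 9 statements merged into one kernel-verified Lean document; each statement's English description precedes it below -/
import Mathlib

section
/- For a linear Gaussian network z(t+1) = A z(t) + σ ξ(t) with σ > 0 and Σ(t) positive definite, the one-step information transfer from state z_i to state z_j is zero for all t if and only if the (j,i) entry of A is zero. -/
open Matrix

/-- For the linear Gaussian network `z(t+1) = A z(t) + σ ξ(t)` with `σ > 0`
and positive definite state covariance `Σ(t)`, the one-step information
transfer from state `z_i` to state `z_j` is zero iff `A_{ji} = 0`.  Here,
following the paper, the state space is split as `z = (x₁, x₂, y)` with
`x₁ = z_i` and `y = z_j` scalar and `x₂` the remaining `n` states, and the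
transfer is given by the formula
`(1/2) log( det(A_{yx} Σ_y^s A_{yx}ᵀ + σ²I) / det(A_{yx₂}(Σ_y^s)_{yx₂}A_{yx₂}ᵀ + σ²I) )`,
where `Σ_y^s = Σ_x − Σ_{xy}Σ_y⁻¹Σ_{xy}ᵀ` and
`(Σ_y^s)_{yx₂} = Σ_{x₂} − Σ_{x₂y}Σ_y⁻¹Σ_{x₂y}ᵀ`.  The statement holds for
every (i.e. all `t`) positive definite covariance `Σ(t)`. -/
theorem information_transfer_zero_iff {n : ℕ}
    (Ayx : Matrix (Fin 1) (Fin 1 ⊕ Fin n) ℝ) (σ : ℝ) (hσ : 0 < σ) :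
    (∀ (Sx : Matrix (Fin 1 ⊕ Fin n) (Fin 1 ⊕ Fin n) ℝ)
       (Sxy : Matrix (Fin 1 ⊕ Fin n) (Fin 1) ℝ) (Sy : Matrix (Fin 1) (Fin 1) ℝ),
       (Matrix.fromBlocks Sx Sxy Sxyᵀ Sy).PosDef →
       (1 / 2) * Real.log
         ((Ayx * (Sx - Sxy * Sy⁻¹ * Sxyᵀ) * Ayxᵀ + σ ^ 2 • (1 : Matrix (Fin 1) (Fin 1) ℝ)).det /
           ((Ayx.submatrix id Sum.inr) * ((Sx.submatrix Sum.inr Sum.inr)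
               - (Sxy.submatrix Sum.inr id) * Sy⁻¹ * (Sxy.submatrix Sum.inr id)ᵀ)
             * (Ayx.submatrix id Sum.inr)ᵀ + σ ^ 2 • (1 : Matrix (Fin 1) (Fin 1) ℝ)).det) = 0)
    ↔ Ayx.submatrix id Sum.inl = 0 := by
  constructor
  · intro h
    have h1 := h 1 0 1 (by
      have : (Matrix.fromBlocks (1 : Matrix (Fin 1 ⊕ Fin n) (Fin 1 ⊕ Fin n) ℝ)
          (0 : Matrix (Fin 1 ⊕ Fin n) (Fin 1) ℝ)
          (0 : Matrix (Fin 1 ⊕ Fin n) (Fin 1) ℝ)ᵀ (1 : Matrix (Fin 1) (Fin 1) ℝ)) = 1 := by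
        rw [Matrix.transpose_zero, Matrix.fromBlocks_one]
      rw [this]
      exact Matrix.PosDef.one)
    rw [Matrix.submatrix_one Sum.inr Sum.inr_injective] at h1
    simp only [inv_one, Matrix.submatrix_zero, Matrix.transpose_zero, Matrix.zero_mul,
      Matrix.mul_zero, sub_zero, Matrix.mul_one, Pi.zero_apply] at h1
    -- h1 : (1/2) * log (det(Ayx Ayxᵀ + σ²I) / det(A₂ A₂ᵀ + σ²I)) = 0
    set X : ℝ := (Ayx * Ayxᵀ + σ ^ 2 • (1 : Matrix (Fin 1) (Fin 1) ℝ)).det with hX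
    set Y : ℝ := ((Ayx.submatrix id Sum.inr) * (Ayx.submatrix id Sum.inr)ᵀ
        + σ ^ 2 • (1 : Matrix (Fin 1) (Fin 1) ℝ)).det with hY
    have hXval : X = (∑ k, Ayx 0 k * Ayx 0 k) + σ ^ 2 := by
      rw [hX, Matrix.det_fin_one]
      simp [Matrix.mul_apply]
    have hYval : Y = (∑ k, Ayx 0 (Sum.inr k) * Ayx 0 (Sum.inr k)) + σ ^ 2 := by
      rw [hY, Matrix.det_fin_one]
      simp [Matrix.mul_apply]
    have hXpos : 0 < X := by
      rw [hXval]
      have : 0 ≤ ∑ k, Ayx 0 k * Ayx 0 k :=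
        Finset.sum_nonneg fun k _ => mul_self_nonneg _
      nlinarith
    have hYpos : 0 < Y := by
      rw [hYval]
      have : 0 ≤ ∑ k, Ayx 0 (Sum.inr k) * Ayx 0 (Sum.inr k) :=
        Finset.sum_nonneg fun k _ => mul_self_nonneg _
      nlinarith
    have hlog : Real.log (X / Y) = 0 := by linarith
    have hXY : X = Y := by
      have hdiv : X / Y = 1 := by
        rcases Real.log_eq_zero.mp hlog with h' | h' | h'
        · exact absurd h' (ne_of_gt (div_pos hXpos hYpos))
        · exact h'
        · nlinarith [div_pos hXpos hYpos]
      field_simp at hdiv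
      linarith
    have hsum : (∑ k, Ayx 0 k * Ayx 0 k)
        = ∑ k, Ayx 0 (Sum.inr k) * Ayx 0 (Sum.inr k) := by
      rw [hXval, hYval] at hXY; linarith
    rw [Fintype.sum_sum_type] at hsum
    simp only [Finset.univ_unique, Finset.sum_singleton] at hsum
    have ha : Ayx 0 (Sum.inl default) * Ayx 0 (Sum.inl default) = 0 := by linarith
    have ha0 : Ayx 0 (Sum.inl 0) = 0 := by
      have := mul_self_eq_zero.mp ha
      simpa using this
    ext i j
    have hi : i = 0 := Subsingleton.elim _ _
    have hj : j = 0 := Subsingleton.elim _ _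
    subst hi; subst hj
    simpa using ha0
  · intro h Sx Sxy Sy _
    have ha : Ayx 0 (Sum.inl 0) = 0 := by
      have := congrFun (congrFun h 0) 0
      simpa using this
    have key : (Ayx * (Sx - Sxy * Sy⁻¹ * Sxyᵀ) * Ayxᵀ + σ ^ 2 • (1 : Matrix (Fin 1) (Fin 1) ℝ))
        = ((Ayx.submatrix id Sum.inr) * ((Sx.submatrix Sum.inr Sum.inr)
               - (Sxy.submatrix Sum.inr id) * Sy⁻¹ * (Sxy.submatrix Sum.inr id)ᵀ)
             * (Ayx.submatrix id Sum.inr)ᵀ + σ ^ 2 • (1 : Matrix (Fin 1) (Fin 1) ℝ)) := by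
      ext i j
      have hi : i = 0 := Subsingleton.elim _ _
      have hj : j = 0 := Subsingleton.elim _ _
      subst hi; subst hj
      simp only [Matrix.add_apply, Matrix.mul_apply, Matrix.sub_apply, Matrix.transpose_apply,
        Matrix.submatrix_apply, id_eq]
      congr 1
      rw [Fintype.sum_sum_type]
      have hz : ∀ k : Fin 1,
          (∑ l, (Sx (Sum.inl k) l - (Sxy * Sy⁻¹ * Sxyᵀ) (Sum.inl k) l) * Ayx 0 l)
            * Ayx 0 (Sum.inl k) = 0 := by
        intro k
        have : k = 0 := Subsingleton.elim _ _
        subst this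
        rw [ha, mul_zero]
      simp [Matrix.mul_apply, Fintype.sum_sum_type, ha]
    rw [key]
    rcases eq_or_ne ((Ayx.submatrix id Sum.inr * (Sx.submatrix Sum.inr Sum.inr
        - Sxy.submatrix Sum.inr id * Sy⁻¹ * (Sxy.submatrix Sum.inr id)ᵀ)
        * (Ayx.submatrix id Sum.inr)ᵀ + σ ^ 2 • (1 : Matrix (Fin 1) (Fin 1) ℝ)).det) 0 with h0 | h0
    · rw [h0]; simp
    · rw [div_self h0]; simp
end

section
/- Let A be an N×N matrix with A_{12} = 0 and suppose [A^k]_{12} = 0 for all k ≥ 1. Let A_{2̸} denote the (N−1)×(N−1) matrix obtained from A by deleting its second row and second column. Then for every k ≥ 1 and every j ≠ 2, [A^k]_{1j} = [A_{2̸}^k]_{1j}, where indices on the right refer to the corresponding retained rows/columns. -/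
/-- Let `A` be an `N × N` matrix, `b` a distinguished index (the paper's
index 2) and `a` another index (the paper's index 1) with `A a b = 0` and
`(A^k) a b = 0` for all `k ≥ 1`.  Let `A'` be the principal submatrix of `A`
obtained by deleting row and column `b`.  Then for every `k ≥ 1` and every
retained index `j ≠ b`, the `(a,j)` entry of `A^k` agrees with the
corresponding entry of `A'^k`. -/
theorem pow_submatrix_agree {N : ℕ} (A : Matrix (Fin N) (Fin N) ℝ)
    (a b : Fin N) (hab : a ≠ b)
    (h1 : A a b = 0) (hk : ∀ k : ℕ, 1 ≤ k → (A ^ k) a b = 0) :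
    ∀ k : ℕ, 1 ≤ k → ∀ j : Fin N, ∀ hj : j ≠ b,
      (A ^ k) a j =
        ((A.submatrix (Subtype.val : {l : Fin N // l ≠ b} → Fin N)
            (Subtype.val : {l : Fin N // l ≠ b} → Fin N)) ^ k) ⟨a, hab⟩ ⟨j, hj⟩ := by
  intro k hk1
  induction k with
  | zero => omega
  | succ k ih =>
    intro j hj
    rcases Nat.eq_zero_or_pos k with h0 | hpos
    · subst h0
      simp [Matrix.submatrix_apply]
    · have ih' := ih hpos
      rw [pow_succ, pow_succ, Matrix.mul_apply, Matrix.mul_apply]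
      have hsplit : ∑ i : Fin N, (A ^ k) a i * A i j
          = (A ^ k) a b * A b j + ∑ i ∈ ({b}ᶜ : Finset (Fin N)), (A ^ k) a i * A i j := by
        rw [← Finset.sum_add_sum_compl {b}]
        simp
      rw [hsplit, hk k hpos, zero_mul, zero_add]
      rw [Finset.sum_subtype (p := fun l => l ≠ b) ({b}ᶜ : Finset (Fin N))
        (fun x => by simp) (fun i => (A ^ k) a i * A i j)]
      apply Finset.sum_congr rfl
      intro i _
      rw [ih' i.1 i.2, Matrix.submatrix_apply]
end

section
/- Consider the linear stochastic system z(k+1) = A z(k) + ξ(k) where the directed graph of A has no path from node 2 to node 1. Then for every k, the random variable z_1(k), expressed as z_1(k) = Σ_j [A^k]_{1j} z_j(0) + Σ_j [A^{k-1}]_{1j} ξ_j(0) + ... + ξ_1(k−1), coincides with the corresponding expression for the system with the second coordinate frozen (i.e., with A replaced by the submatrix A_{2̸} on the remaining coordinates). Consequently the k-step information transfer from z_2 to z_1 is zero for all k. -/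
open Matrix

/-- The trajectory of the linear stochastic system `z(k+1) = A z(k) + ξ(k)`,
so that `z(k) = A^k z(0) + A^{k-1} ξ(0) + ⋯ + ξ(k-1)`. -/
noncomputable def traj {ι : Type*} [Fintype ι] (A : Matrix ι ι ℝ)
    (z0 : ι → ℝ) (ξ : ℕ → ι → ℝ) : ℕ → ι → ℝ
  | 0 => z0
  | (k + 1) => A *ᵥ (traj A z0 ξ k) + ξ k

lemma traj_frozen_aux {N : ℕ} (A : Matrix (Fin N) (Fin N) ℝ) (b : Fin N)
    (z0 : Fin N → ℝ) (ξ : ℕ → Fin N → ℝ) :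
    ∀ (k : ℕ) (p : Fin N) (hp : p ≠ b)
      (_ : ¬ Relation.TransGen (fun p q => A q p ≠ 0) b p),
      traj A z0 ξ k p =
        traj (A.submatrix (Subtype.val : {l : Fin N // l ≠ b} → Fin N) Subtype.val)
          (fun l => z0 l) (fun t l => ξ t l) k ⟨p, hp⟩ := by
  intro k
  induction k with
  | zero => intro p hp _; rfl
  | succ k ih =>
    intro p hp hnp
    have hApb : A p b = 0 := by
      by_contra h
      exact hnp (Relation.TransGen.single h)
    show (A *ᵥ traj A z0 ξ k) p + ξ k p = _
    have : (traj (A.submatrix (Subtype.val : {l : Fin N // l ≠ b} → Fin N) Subtype.val)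
          (fun l => z0 l) (fun t l => ξ t l) (k+1)) ⟨p, hp⟩
        = (∑ q : {l : Fin N // l ≠ b},
            A p q * traj (A.submatrix (Subtype.val : {l : Fin N // l ≠ b} → Fin N) Subtype.val)
              (fun l => z0 l) (fun t l => ξ t l) k q) + ξ k p := by
      simp [traj, mulVec, dotProduct, submatrix]
    rw [this]
    congr 1
    have hsum : (A *ᵥ traj A z0 ξ k) p = ∑ q, A p q * traj A z0 ξ k q := rfl
    rw [hsum]
    have key : ∀ q : {l : Fin N // l ≠ b},
        A p q * traj A z0 ξ k q
          = A p q * traj (A.submatrix (Subtype.val : {l : Fin N // l ≠ b} → Fin N) Subtype.val)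
              (fun l => z0 l) (fun t l => ξ t l) k q := by
      intro q
      by_cases hq : A p q = 0
      · simp [hq]
      · have hnq : ¬ Relation.TransGen (fun p q => A q p ≠ 0) b q.1 := by
          intro h
          exact hnp (h.tail hq)
        rw [ih q.1 q.2 hnq]
    rw [← Finset.add_sum_erase Finset.univ (fun q => A p q * traj A z0 ξ k q)
        (Finset.mem_univ b), hApb, zero_mul, zero_add,
      Finset.sum_subtype (Finset.univ.erase b)
        (by simp : ∀ x : Fin N, x ∈ Finset.univ.erase b ↔ x ≠ b)
        (fun q => A p q * traj A z0 ξ k q)]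
    exact Finset.sum_congr rfl (fun q _ => key q)

/-- If the directed graph of `A` (edge `p → q` iff `A q p ≠ 0`) has no path
from node `b` (the paper's node 2) to node `a` (the paper's node 1), then the
random variable `z_a(k)` of the system `z(k+1) = A z(k) + ξ(k)` coincides, for
every initial condition `z(0)`, every noise realization `ξ` and every `k`,
with the corresponding variable of the system with coordinate `b` frozen
(i.e. evolved by the principal submatrix `A_{b̸}` on the remaining
coordinates).  Consequently, for any entropy functional of the (random)
trajectory of coordinate `a`, the `k`-step information transfer from `z_b` to
`z_a` — a difference of entropies of the two identical random trajectories —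
is zero for all `k`. -/
theorem frozen_trajectory_eq_of_no_path {N : ℕ} (A : Matrix (Fin N) (Fin N) ℝ)
    (a b : Fin N) (hab : a ≠ b)
    (hpath : ¬ Relation.TransGen (fun p q => A q p ≠ 0) b a) :
    (∀ (z0 : Fin N → ℝ) (ξ : ℕ → Fin N → ℝ) (k : ℕ),
      traj A z0 ξ k a =
        traj (A.submatrix (Subtype.val : {l : Fin N // l ≠ b} → Fin N) Subtype.val)
          (fun l => z0 l) (fun t l => ξ t l) k ⟨a, hab⟩)
    ∧ ∀ (k : ℕ)
        (H : (((Fin N → ℝ) → (ℕ → Fin N → ℝ) → Fin (k + 1) → ℝ)) → ℝ),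
        H (fun z0 ξ l => traj A z0 ξ l a)
          - H (fun z0 ξ l =>
              traj (A.submatrix (Subtype.val : {l : Fin N // l ≠ b} → Fin N) Subtype.val)
                (fun l => z0 l) (fun t l => ξ t l) l ⟨a, hab⟩) = 0 := by
  have main : ∀ (z0 : Fin N → ℝ) (ξ : ℕ → Fin N → ℝ) (k : ℕ),
      traj A z0 ξ k a =
        traj (A.submatrix (Subtype.val : {l : Fin N // l ≠ b} → Fin N) Subtype.val)
          (fun l => z0 l) (fun t l => ξ t l) k ⟨a, hab⟩ :=
    fun z0 ξ k => traj_frozen_aux A b z0 ξ k a hab hpath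
  refine ⟨main, fun k H => ?_⟩
  have : (fun z0 ξ (l : Fin (k+1)) => traj A z0 ξ l a)
      = (fun z0 ξ (l : Fin (k+1)) =>
          traj (A.submatrix (Subtype.val : {l : Fin N // l ≠ b} → Fin N) Subtype.val)
            (fun l => z0 l) (fun t l => ξ t l) l ⟨a, hab⟩) := by
    funext z0 ξ l; exact main z0 ξ l
  rw [this, sub_self]
end

section
/- If the k-step information transfer from state z_i to state z_j of the linear system z(t+1) = A z(t) + ξ(t) is non-zero for some k ≥ 1, then there is a directed path from node z_i to node z_j in the directed graph associated with A. -/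
/-!
If `i` does not reach `j`, then by induction on time every node `q` not reachable from `i` only
ever reads coordinates that are themselves unreachable, so its trajectory is the same whether
or not `z_i` is frozen. Hence the two random trajectories of `z_j` are the same function of the
initial condition and the noise, and any entropy functional takes the same value on both.
-/

open Matrix

section FrozenNode

variable {ι : Type*} [Fintype ι] [DecidableEq ι]

theorem Matrix.mulVec_apply_eq_submatrix_ne_mulVec {R : Type*} [NonUnitalNonAssocSemiring R]
    (A : Matrix ι ι R) {i q : ι} (hq : q ≠ i) (x : ι → R) (y : {l // l ≠ i} → R)
    (hxy : ∀ p, A q p ≠ 0 → ∃ hp : p ≠ i, x p = y ⟨p, hp⟩) :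
    (A *ᵥ x) q = (A.submatrix (Subtype.val : {l // l ≠ i} → ι) Subtype.val *ᵥ y) ⟨q, hq⟩ := by
  have hAqi : A q i = 0 := by
    by_contra h
    exact (hxy i h).elim fun hi _ => hi rfl
  calc (A *ᵥ x) q = ∑ p ∈ Finset.univ.erase i, A q p * x p := by
        rw [mulVec, dotProduct, Finset.sum_erase _ (by simp [hAqi])]
    _ = ∑ p : {l // l ≠ i}, A q p * x p :=
        Finset.sum_subtype _ (fun _ => by simp) _
    _ = ∑ p : {l // l ≠ i}, A q p * y p := by
        refine Finset.sum_congr rfl fun p _ => ?_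
        by_cases hqp : A q p = 0
        · simp [hqp]
        · obtain ⟨_, hp⟩ := hxy p hqp
          rw [hp]
    _ = (A.submatrix Subtype.val Subtype.val *ᵥ y) ⟨q, hq⟩ := rfl

theorem traj_apply_eq_traj_submatrix_ne_of_not_transGen (A : Matrix ι ι ℝ) {i q : ι}
    (hq : q ≠ i) (hreach : ¬ Relation.TransGen (fun p q => A q p ≠ 0) i q)
    (z0 : ι → ℝ) (ξ : ℕ → ι → ℝ) (k : ℕ) :
    traj A z0 ξ k q =
      traj (A.submatrix (Subtype.val : {l // l ≠ i} → ι) Subtype.val)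
        (fun l => z0 l) (fun t l => ξ t l) k ⟨q, hq⟩ := by
  induction k generalizing q with
  | zero => rfl
  | succ k ih =>
    refine congrArg (· + ξ k q) (A.mulVec_apply_eq_submatrix_ne_mulVec hq _ _ fun p hqp => ?_)
    have hp : p ≠ i := by
      rintro rfl
      exact hreach (.single hqp)
    exact ⟨hp, ih hp fun hip => hreach (hip.tail hqp)⟩

end FrozenNode

/-- If the `k`-step information transfer from state `z_i` to state `z_j` of
the system `z(t+1) = A z(t) + ξ(t)` is non-zero for some `k ≥ 1`, then there
is a directed path from node `i` to node `j` in the directed graph of `A`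
(edge `p → q` iff `A q p ≠ 0`).  The `k`-step transfer is the difference
`H(z_j(k)|z_j(k-1),…,z_j(0)) − H_{i̸}(z_j(k)|z_j(k-1),…,z_j(0))`, where the
frozen system evolves by the principal submatrix of `A` deleting row and
column `i`; it is expressed here via an (arbitrary) entropy functional
`Hent k` of the random trajectory `(z_j(0),…,z_j(k))`, viewed as a function
of the initial condition and the noise. -/
theorem path_of_information_transfer_ne_zero {N : ℕ}
    (A : Matrix (Fin N) (Fin N) ℝ) (i j : Fin N) (hij : j ≠ i)
    (Hent : (k : ℕ) → (((Fin N → ℝ) → (ℕ → Fin N → ℝ) → Fin (k + 1) → ℝ)) → ℝ)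
    (htransfer : ∃ k : ℕ, 1 ≤ k ∧
      Hent k (fun z0 ξ l => traj A z0 ξ l j)
        - Hent k (fun z0 ξ l =>
            traj (A.submatrix (Subtype.val : {l : Fin N // l ≠ i} → Fin N) Subtype.val)
              (fun l => z0 l) (fun t l => ξ t l) l ⟨j, hij⟩) ≠ 0) :
    Relation.TransGen (fun p q => A q p ≠ 0) i j := by
  by_contra hreach
  obtain ⟨k, -, htransfer_ne⟩ := htransfer
  refine htransfer_ne (sub_eq_zero.mpr (congrArg (Hent k) ?_))
  funext z0 ξ l
  exact traj_apply_eq_traj_submatrix_ne_of_not_transGen A hij hreach z0 ξ l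
end

section
/- If, for the system z(t+1) = A z(t) + B u(t), the information transfer from the input u to every state z_i is non-zero (for some number of steps), then the extended directed graph of the system is input-reachable, i.e., every node is reachable from the input node; hence the system is structurally controllable. -/
open Matrix

/-- The extended system matrix of `z(t+1) = A z(t) + B u(t)`, obtained by
adjoining the input `u` as an extra node (`Sum.inl ()`). -/
noncomputable def extendedMatrix {N : ℕ} (A : Matrix (Fin N) (Fin N) ℝ)
    (B : Fin N → ℝ) : Matrix (Unit ⊕ Fin N) (Unit ⊕ Fin N) ℝ :=
  fun p q =>
    match p, q with
    | Sum.inr j', Sum.inr i' => A j' i'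
    | Sum.inr j', Sum.inl _ => B j'
    | Sum.inl _, _ => 0

/-- The edge relation of the extended graph: `z_i → z_j` iff `A j i ≠ 0`,
`u → z_k` iff `B k ≠ 0`, no edges into `u`. -/
def extEdge {N : ℕ} (A : Matrix (Fin N) (Fin N) ℝ) (B : Fin N → ℝ) :
    Unit ⊕ Fin N → Unit ⊕ Fin N → Prop :=
  fun p q =>
    match p, q with
    | Sum.inr i', Sum.inr j' => A j' i' ≠ 0
    | Sum.inl _, Sum.inr k' => B k' ≠ 0
    | _, Sum.inl _ => False

def subEquiv {N : ℕ} : Fin N ≃ {l : Unit ⊕ Fin N // l ≠ Sum.inl ()} where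
  toFun i := ⟨Sum.inr i, Sum.inr_ne_inl⟩
  invFun p := match p with
    | ⟨Sum.inr j, _⟩ => j
    | ⟨Sum.inl _, h⟩ => absurd rfl h
  left_inv i := rfl
  right_inv p := by
    obtain ⟨val, h⟩ := p
    cases val with
    | inl u => exact absurd rfl h
    | inr j => rfl

lemma key {N : ℕ} (A : Matrix (Fin N) (Fin N) ℝ) (B : Fin N → ℝ)
    (z0 : Unit ⊕ Fin N → ℝ) (ξ : ℕ → Unit ⊕ Fin N → ℝ) :
    ∀ l : ℕ, ∀ i : Fin N,
      ¬ Relation.TransGen (extEdge A B) (Sum.inl ()) (Sum.inr i) →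
      traj (extendedMatrix A B) z0 ξ l (Sum.inr i) =
      traj ((extendedMatrix A B).submatrix
          (Subtype.val : {l : Unit ⊕ Fin N // l ≠ Sum.inl ()} → Unit ⊕ Fin N)
          Subtype.val)
        (fun l => z0 l) (fun t l => ξ t l) l ⟨Sum.inr i, Sum.inr_ne_inl⟩ := by
  intro l
  induction l with
  | zero => intro i h; rfl
  | succ l ih =>
    intro i h
    have hB : B i = 0 := by
      by_contra hB
      exact h (Relation.TransGen.single hB)
    show (extendedMatrix A B *ᵥ traj (extendedMatrix A B) z0 ξ l + ξ l) (Sum.inr i) = _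
    simp only [traj, Pi.add_apply, Matrix.mulVec, dotProduct,
      Matrix.submatrix_apply]
    congr 1
    rw [Fintype.sum_sum_type, ← Equiv.sum_comp (subEquiv (N := N))]
    have h1 : ∀ u : Unit,
        extendedMatrix A B (Sum.inr i) (Sum.inl u) * traj (extendedMatrix A B) z0 ξ l (Sum.inl u) = 0 := by
      intro u
      have : extendedMatrix A B (Sum.inr i) (Sum.inl u) = B i := rfl
      rw [this, hB, zero_mul]
    rw [Finset.sum_congr rfl (fun u _ => h1 u), Finset.sum_const_zero, zero_add]
    apply Finset.sum_congr rfl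
    intro m _
    show A i m * traj (extendedMatrix A B) z0 ξ l (Sum.inr m) = A i m * _
    by_cases hA : A i m = 0
    · rw [hA, zero_mul, zero_mul]
    · have hm : ¬ Relation.TransGen (extEdge A B) (Sum.inl ()) (Sum.inr m) := by
        intro hr
        exact h (hr.tail (show extEdge A B (Sum.inr m) (Sum.inr i) from hA))
      rw [ih m hm]; rfl

/-- If the information transfer from the input `u` to every state `z_i` of
`z(t+1) = A z(t) + B u(t)` is non-zero for some number of steps, then in the
extended directed graph every node is reachable from the input node; hence the
system is structurally controllable (input reachability).  The `k`-step
transfer from `u` to `z_i` is expressed via an (arbitrary) entropy functional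
`Hent k` of the random trajectory of the coordinate `z_i` in the extended
system, where freezing `u` means evolving by the principal submatrix deleting
the input node. -/
theorem structurally_controllable_of_transfer_ne_zero {N : ℕ}
    (A : Matrix (Fin N) (Fin N) ℝ) (B : Fin N → ℝ)
    (Hent : (k : ℕ) →
      (((Unit ⊕ Fin N → ℝ) → (ℕ → Unit ⊕ Fin N → ℝ) → Fin (k + 1) → ℝ)) → ℝ)
    (htransfer : ∀ i : Fin N, ∃ k : ℕ, 1 ≤ k ∧
      Hent k (fun z0 ξ l => traj (extendedMatrix A B) z0 ξ l (Sum.inr i))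
        - Hent k (fun z0 ξ l =>
            traj ((extendedMatrix A B).submatrix
                (Subtype.val : {l : Unit ⊕ Fin N // l ≠ Sum.inl ()} → Unit ⊕ Fin N)
                Subtype.val)
              (fun l => z0 l) (fun t l => ξ t l) l ⟨Sum.inr i, Sum.inr_ne_inl⟩) ≠ 0) :
    ∀ i : Fin N, Relation.TransGen (extEdge A B) (Sum.inl ()) (Sum.inr i) := by
  intro i
  by_contra h
  obtain ⟨k, -, hne⟩ := htransfer i
  apply hne
  have : (fun z0 ξ (l : Fin (k+1)) => traj (extendedMatrix A B) z0 ξ l (Sum.inr i))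
      = (fun z0 ξ (l : Fin (k+1)) =>
          traj ((extendedMatrix A B).submatrix
              (Subtype.val : {l : Unit ⊕ Fin N // l ≠ Sum.inl ()} → Unit ⊕ Fin N)
              Subtype.val)
            (fun l => z0 l) (fun t l => ξ t l) l ⟨Sum.inr i, Sum.inr_ne_inl⟩) := by
    funext z0 ξ l
    exact key A B z0 ξ l i h
  rw [this, sub_self]
end

section
/- Consider a measure-preserving-type setup: a continuous map T : ℝ^n → ℝ^n with components T_1,...,T_n and the Perron–Frobenius operator ℙ acting on densities. If T_1 does not depend on the coordinate z², then for every density ρ on the product sample space, the marginal of ℙρ in the first coordinate equals the marginal of ℙρ_{2̸} in the first coordinate almost everywhere, where ρ_{2̸} is the density with the second coordinate marginalized out and the dynamics restricted accordingly. -/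
open MeasureTheory

/-- `Pρ` is the image of the density `ρ` under the Perron–Frobenius operator
of `T`: for every Borel set `ω`, `∫_ω Pρ = ∫_{T⁻¹ ω} ρ`. -/
def IsPFImage {α : Type*} [MeasureSpace α] (T : α → α) (ρ Pρ : α → ℝ) : Prop :=
  ∀ s : Set α, MeasurableSet s → ∫ x in s, Pρ x = ∫ x in T ⁻¹' s, ρ x

/-- The marginal of a density `f` on `ℝ^ι` in the coordinate `i`. -/
noncomputable def margAt {ι : Type*} [Fintype ι] [DecidableEq ι] (i : ι)
    (f : (ι → ℝ) → ℝ) (x : ℝ) : ℝ :=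
  ∫ w : {l : ι // l ≠ i} → ℝ, f (fun l => if h : l = i then x else w ⟨l, h⟩)

/-- Marginalizing the coordinate `i` out of a density `f` on `ℝ^ι`. -/
noncomputable def margOut {ι : Type*} [Fintype ι] [DecidableEq ι] (i : ι)
    (f : (ι → ℝ) → ℝ) (w : {l : ι // l ≠ i} → ℝ) : ℝ :=
  ∫ x : ℝ, f (fun l => if h : l = i then x else w ⟨l, h⟩)

/-!
Both marginals have the same integral over every Borel set `s ⊆ ℝ`, namely the integral of `ρ`
over `{z | T z i₁ ∈ s}`. For `ℙρ` this is the defining property of the Perron–Frobenius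
operator. For `ℙ'ρ_{2̸}` the defining property gives the integral of `ρ_{2̸}` over
`{w | T' w i₁ ∈ s}`; since `T z i₁ = T' (z without z^{i₂}) i₁`, the set `{z | T z i₁ ∈ s}` is the
cylinder over it in the coordinate `i₂`, and Fubini identifies the two integrals. Integrable
functions with equal integrals over all Borel sets agree almost everywhere.
-/

-- Built from `funUnique` rather than `Equiv.funSplitAt` so that its inverse is definitionally
-- the `dite` appearing in `margAt` and `margOut`.
noncomputable def MeasurableEquiv.funSplitAt {ι : Type*} [DecidableEq ι] (i : ι) (β : Type*)
    [MeasurableSpace β] : (ι → β) ≃ᵐ β × ({l : ι // l ≠ i} → β) :=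
  (MeasurableEquiv.piEquivPiSubtypeProd (fun _ : ι => β) (· = i)).trans
    ((MeasurableEquiv.funUnique {l : ι // l = i} β).prodCongr (MeasurableEquiv.refl _))

section FunSplitAt

variable {ι : Type*} [DecidableEq ι] (i : ι) (β : Type*) [MeasurableSpace β]

theorem MeasurableEquiv.funSplitAt_apply (z : ι → β) :
    MeasurableEquiv.funSplitAt i β z = (z i, Subtype.restrict (· ≠ i) z) :=
  rfl

theorem preimage_funSplitAt_prod_univ (s : Set β) :
    MeasurableEquiv.funSplitAt i β ⁻¹' s ×ˢ Set.univ = (fun z : ι → β => z i) ⁻¹' s := by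
  ext z
  simp [MeasurableEquiv.funSplitAt_apply]

theorem preimage_funSplitAt_univ_prod (A : Set ({l : ι // l ≠ i} → β)) :
    MeasurableEquiv.funSplitAt i β ⁻¹' Set.univ ×ˢ A = Subtype.restrict (· ≠ i) ⁻¹' A := by
  ext z
  simp [MeasurableEquiv.funSplitAt_apply]

end FunSplitAt

theorem MeasureTheory.volume_preserving_funSplitAt {ι : Type*} [Fintype ι] [DecidableEq ι]
    (i : ι) (β : Type*) [MeasureSpace β] [SigmaFinite (volume : Measure β)] :
    MeasurePreserving (MeasurableEquiv.funSplitAt i β) volume volume := by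
  rw [MeasurableEquiv.funSplitAt, MeasurableEquiv.coe_trans]
  refine MeasurePreserving.comp ?_
    (volume_preserving_piEquivPiSubtypeProd (fun _ : ι => β) (· = i))
  refine MeasurePreserving.prod ?_ (MeasurePreserving.id _)
  convert volume_preserving_funUnique {l : ι // l = i} β using 2
  all_goals congr!

section Marginals

variable {ι : Type*} [Fintype ι] [DecidableEq ι] (i : ι) {f : (ι → ℝ) → ℝ}

theorem MeasureTheory.Integrable.comp_funSplitAt_symm (hf : Integrable f) :
    Integrable (f ∘ (MeasurableEquiv.funSplitAt i ℝ).symm) (volume.prod volume) :=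
  (((volume_preserving_funSplitAt i ℝ).symm _).integrable_comp_emb
    (MeasurableEquiv.measurableEmbedding _)).mpr hf

theorem integrable_margAt (hf : Integrable f) : Integrable (margAt i f) :=
  (hf.comp_funSplitAt_symm i).integral_prod_left

theorem setIntegral_margAt (hf : Integrable f) (s : Set ℝ) :
    ∫ x in s, margAt i f x = ∫ z in (fun z : ι → ℝ => z i) ⁻¹' s, f z := by
  set e := MeasurableEquiv.funSplitAt i ℝ
  calc ∫ x in s, margAt i f x
      = ∫ x in s, ∫ w in Set.univ, (f ∘ e.symm) (x, w) := by
        simp only [Measure.restrict_univ]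
        rfl
    _ = ∫ p in s ×ˢ Set.univ, (f ∘ e.symm) p ∂(volume.prod volume) :=
        (setIntegral_prod _ (hf.comp_funSplitAt_symm i).integrableOn).symm
    _ = ∫ z in e ⁻¹' s ×ˢ Set.univ, f (e.symm (e z)) :=
        ((volume_preserving_funSplitAt i ℝ).setIntegral_preimage_emb
          e.measurableEmbedding _ _).symm
    _ = ∫ z in (fun z : ι → ℝ => z i) ⁻¹' s, f z := by
        rw [preimage_funSplitAt_prod_univ]
        simp only [MeasurableEquiv.symm_apply_apply]

theorem setIntegral_margOut (hf : Integrable f) (A : Set ({l : ι // l ≠ i} → ℝ)) :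
    ∫ z in Subtype.restrict (· ≠ i) ⁻¹' A, f z = ∫ w in A, margOut i f w := by
  set e := MeasurableEquiv.funSplitAt i ℝ
  have hrestrict : (volume.prod volume).restrict (Set.univ ×ˢ A)
      = (volume : Measure ℝ).prod (volume.restrict A) := by
    rw [← Measure.prod_restrict, Measure.restrict_univ]
  calc ∫ z in Subtype.restrict (· ≠ i) ⁻¹' A, f z
      = ∫ z in e ⁻¹' Set.univ ×ˢ A, f (e.symm (e z)) := by
        rw [preimage_funSplitAt_univ_prod]
        simp only [MeasurableEquiv.symm_apply_apply]
    _ = ∫ p in Set.univ ×ˢ A, (f ∘ e.symm) p ∂(volume.prod volume) :=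
        (volume_preserving_funSplitAt i ℝ).setIntegral_preimage_emb e.measurableEmbedding
          (f ∘ e.symm) _
    _ = ∫ w in A, ∫ x, (f ∘ e.symm) (x, w) := by
        rw [hrestrict]
        refine integral_prod_symm _ ?_
        rw [← hrestrict]
        exact (hf.comp_funSplitAt_symm i).integrableOn
    _ = ∫ w in A, margOut i f w := rfl

theorem integral_margOut (hf : Integrable f) : ∫ w, margOut i f w = ∫ z, f z := by
  simpa using (setIntegral_margOut i hf Set.univ).symm

end Marginals

namespace IsPFImage

theorem integral_eq {α : Type*} [MeasureSpace α] {T : α → α} {ρ Pρ : α → ℝ}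
    (h : IsPFImage T ρ Pρ) : ∫ x, Pρ x = ∫ x, ρ x := by
  simpa using h Set.univ MeasurableSet.univ

theorem integrable {α : Type*} [MeasureSpace α] {T : α → α} {ρ Pρ : α → ℝ}
    (h : IsPFImage T ρ Pρ) (hρ : ∫ x, ρ x ≠ 0) : Integrable Pρ :=
  .of_integral_ne_zero (h.integral_eq ▸ hρ)

theorem setIntegral_margAt {ι : Type*} [Fintype ι] [DecidableEq ι] {T : (ι → ℝ) → ι → ℝ}
    {ρ Pρ : (ι → ℝ) → ℝ} (h : IsPFImage T ρ Pρ) (hPρ : Integrable Pρ) (i : ι) {s : Set ℝ}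
    (hs : MeasurableSet s) :
    ∫ x in s, margAt i Pρ x = ∫ z in (fun z => T z i) ⁻¹' s, ρ z := by
  rw [_root_.setIntegral_margAt i hPρ, h _ (measurable_pi_apply i hs)]
  rfl

end IsPFImage

theorem pf_marginal_eq_of_independent_general {n : ℕ} (i₁ i₂ : Fin n) (h12 : i₁ ≠ i₂)
    (T : (Fin n → ℝ) → (Fin n → ℝ))
    (T' : ({l : Fin n // l ≠ i₂} → ℝ) → ({l : Fin n // l ≠ i₂} → ℝ))
    (hT' : ∀ z : Fin n → ℝ, T' (fun l => z l) ⟨i₁, h12⟩ = T z i₁)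
    (ρ : (Fin n → ℝ) → ℝ)
    (hρ1 : ∫ z, ρ z = 1)
    (Pρ : (Fin n → ℝ) → ℝ) (hPρ : IsPFImage T ρ Pρ)
    (Pρ' : ({l : Fin n // l ≠ i₂} → ℝ) → ℝ) (hPρ' : IsPFImage T' (margOut i₂ ρ) Pρ') :
    ∀ᵐ x : ℝ, margAt i₁ Pρ x = margAt (⟨i₁, h12⟩ : {l : Fin n // l ≠ i₂}) Pρ' x := by
  have hρ : Integrable ρ := integrable_of_integral_eq_one hρ1
  have hPρInt : Integrable Pρ := hPρ.integrable (by simp [hρ1])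
  have hPρ'Int : Integrable Pρ' := hPρ'.integrable (by simp [integral_margOut i₂ hρ, hρ1])
  refine Integrable.ae_eq_of_forall_setIntegral_eq _ _ (integrable_margAt i₁ hPρInt)
    (integrable_margAt _ hPρ'Int) fun s hs _ => ?_
  have hcylinder : (fun z => T z i₁) ⁻¹' s
      = Subtype.restrict (· ≠ i₂) ⁻¹' ((fun w => T' w ⟨i₁, h12⟩) ⁻¹' s) := by
    ext z
    rw [Set.mem_preimage, ← hT' z]
    rfl
  rw [hPρ.setIntegral_margAt hPρInt i₁ hs, hPρ'.setIntegral_margAt hPρ'Int _ hs, hcylinder,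
    setIntegral_margOut i₂ hρ]

/-- Let `T : ℝ^n → ℝ^n` be continuous with first component `T_{i₁}`
independent of the coordinate `i₂`, and let `T'` be the dynamics on the
remaining coordinates, restricted accordingly (its `i₁`-component agrees with
`T_{i₁}`).  Then for every density `ρ`, the `i₁`-marginal of the
Perron–Frobenius image of `ρ` equals, almost everywhere, the `i₁`-marginal of
the Perron–Frobenius image of the density `ρ_{i₂̸}` (with coordinate `i₂`
marginalized out) under the restricted dynamics. -/
theorem pf_marginal_eq_of_independent {n : ℕ} (i₁ i₂ : Fin n) (h12 : i₁ ≠ i₂)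
    (T : (Fin n → ℝ) → (Fin n → ℝ)) (hT : Continuous T)
    (hind : ∀ z w : Fin n → ℝ, (∀ l, l ≠ i₂ → z l = w l) → T z i₁ = T w i₁)
    (T' : ({l : Fin n // l ≠ i₂} → ℝ) → ({l : Fin n // l ≠ i₂} → ℝ))
    (hT' : ∀ z : Fin n → ℝ, T' (fun l => z l) ⟨i₁, h12⟩ = T z i₁)
    (ρ : (Fin n → ℝ) → ℝ) (hρ : Measurable ρ) (hρ0 : ∀ z, 0 ≤ ρ z)
    (hρ1 : ∫ z, ρ z = 1)
    (Pρ : (Fin n → ℝ) → ℝ) (hPρ : IsPFImage T ρ Pρ)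
    (Pρ' : ({l : Fin n // l ≠ i₂} → ℝ) → ℝ) (hPρ' : IsPFImage T' (margOut i₂ ρ) Pρ') :
    ∀ᵐ x : ℝ, margAt i₁ Pρ x = margAt (⟨i₁, h12⟩ : {l : Fin n // l ≠ i₂}) Pρ' x :=
  pf_marginal_eq_of_independent_general i₁ i₂ h12 T T' hT' ρ hρ1 Pρ hPρ Pρ' hPρ'
end

section
/- For the control system x' = A_x x + A_{xy} y + B_x u with Gaussian state (x,y) of positive definite covariance Σ and input u Gaussian of covariance Σ_u, independent of the state, the conditional covariance of x' given x is A_{xy} Σ_x^s A_{xy}^⊤ + B_x Σ_u B_x^⊤, where Σ_x^s is the Schur complement of Σ_x in Σ; when u is frozen it is A_{xy} Σ_x^s A_{xy}^⊤; consequently the one-step information transfer from u to x equals (1/2) log( det(A_{xy} Σ_x^s A_{xy}^⊤ + B_x Σ_u B_x^⊤) / det(A_{xy} Σ_x^s A_{xy}^⊤) ), provided A_{xy} Σ_x^s A_{xy}^⊤ is invertible. -/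
/-!
Write `K = A_x Σ_x + A_{xy} Σ_{xy}ᵀ` for the cross covariance of `(x', x)`. Expanding
`K Σ_x⁻¹ Kᵀ` and cancelling `Σ_x Σ_x⁻¹` leaves, after subtraction from the covariance of `x'`,
only `A_{xy} (Σ_y − Σ_{xy}ᵀ Σ_x⁻¹ Σ_{xy}) A_{xy}ᵀ` plus the input term. The Schur complement of
a positive definite block matrix is positive semidefinite, so the frozen-input conditional
covariance is positive semidefinite and, being invertible, positive definite; adding
`B_x Σ_u B_xᵀ ≥ 0` keeps it so. Both determinants are therefore nonzero and the difference of the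
two Gaussian entropies is the logarithm of their ratio.
-/

open Matrix

/-- Gaussian entropy `(1/2) log((2πe)^d det Σ)`. -/
noncomputable def gaussEntropy (d : ℕ) (S : Matrix (Fin d) (Fin d) ℝ) : ℝ :=
  (1 / 2) * Real.log ((2 * Real.pi * Real.exp 1) ^ d * S.det)

namespace Matrix

theorem PosDef.of_fromBlocks₁₁ {R : Type*} [Ring R] [PartialOrder R] [StarRing R]
    {m n : Type*} {A : Matrix m m R} {B : Matrix m n R} {C : Matrix n m R} {D : Matrix n n R}
    (h : (fromBlocks A B C D).PosDef) : A.PosDef :=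
  h.submatrix Sum.inl_injective

theorem PosDef.posSemidef_schur₁₁ {R : Type*} [Field R] [PartialOrder R] [StarRing R]
    [StarOrderedRing R] [TrivialStar R] {m n : Type*} [Fintype m] [Finite n] [DecidableEq m]
    {A : Matrix m m R} {B : Matrix m n R} {D : Matrix n n R}
    (h : (fromBlocks A B Bᵀ D).PosDef) : (D - Bᵀ * A⁻¹ * B).PosSemidef := by
  have hA : A.PosDef := h.of_fromBlocks₁₁
  have : Invertible A := hA.isUnit.invertible
  have hschur := PosDef.fromBlocks₁₁ B D hA
  rw [conjTranspose_eq_transpose_of_trivial] at hschur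
  exact hschur.mp h.posSemidef

section CommRing

variable {R : Type*} [CommRing R] {m n k : Type*} [Fintype m] [Fintype n] [DecidableEq m]
  {Sx : Matrix m m R}

theorem mul_add_mul_transpose_mul_inv_mul (hsymm : Sx.IsSymm) (hdet : IsUnit Sx.det)
    (Sxy : Matrix m n R) (Ax : Matrix k m R) (Axy : Matrix k n R) :
    (Ax * Sx + Axy * Sxyᵀ) * Sx⁻¹ * (Ax * Sx + Axy * Sxyᵀ)ᵀ
      = Ax * Sx * Axᵀ + Ax * Sxy * Axyᵀ + Axy * Sxyᵀ * Axᵀ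
        + Axy * (Sxyᵀ * Sx⁻¹ * Sxy) * Axyᵀ := by
  rw [transpose_add, transpose_mul, transpose_mul, hsymm.eq]
  simp only [transpose_transpose, Matrix.add_mul, Matrix.mul_add, Matrix.mul_assoc,
    nonsing_inv_mul_cancel_left _ _ hdet, mul_nonsing_inv_cancel_left _ _ hdet]
  abel

theorem sub_mul_inv_mul_transpose_eq_mul_schur_mul (hsymm : Sx.IsSymm) (hdet : IsUnit Sx.det)
    (Sxy : Matrix m n R) (Sy : Matrix n n R) (Ax : Matrix k m R) (Axy : Matrix k n R) :
    (Ax * Sx * Axᵀ + Ax * Sxy * Axyᵀ + Axy * Sxyᵀ * Axᵀ + Axy * Sy * Axyᵀ)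
        - (Ax * Sx + Axy * Sxyᵀ) * Sx⁻¹ * (Ax * Sx + Axy * Sxyᵀ)ᵀ
      = Axy * (Sy - Sxyᵀ * Sx⁻¹ * Sxy) * Axyᵀ := by
  rw [mul_add_mul_transpose_mul_inv_mul hsymm hdet, Matrix.mul_sub, Matrix.sub_mul]
  abel

end CommRing

end Matrix

theorem gaussEntropy_sub_gaussEntropy {d : ℕ} {S T : Matrix (Fin d) (Fin d) ℝ}
    (hS : S.det ≠ 0) (hT : T.det ≠ 0) :
    gaussEntropy d S - gaussEntropy d T = 1 / 2 * Real.log (S.det / T.det) := by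
  have hc : (2 * Real.pi * Real.exp 1) ^ d ≠ 0 := by positivity
  rw [gaussEntropy, gaussEntropy, Real.log_mul hc hS, Real.log_mul hc hT, Real.log_div hS hT]
  ring

/-- For the control system `x' = A_x x + A_{xy} y + B_x u` with Gaussian state
`(x,y)` of positive definite covariance `Σ = [[Σ_x,Σ_{xy}],[Σ_{xy}ᵀ,Σ_y]]` and
zero-mean Gaussian input `u` of covariance `Σ_u` independent of the state:
the conditional covariance of `x'` given `x` (the Schur complement of `Σ_x` in
the joint covariance of `(x',x)`) equals `A_{xy} Σ_x^s A_{xy}ᵀ + B_x Σ_u B_xᵀ`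
with `Σ_x^s = Σ_y − Σ_{xy}ᵀ Σ_x⁻¹ Σ_{xy}`; with `u` frozen it equals
`A_{xy} Σ_x^s A_{xy}ᵀ`; consequently the information transfer
`T_{u→x} = H(x'|x) − H_{u̸}(x'|x)` equals
`(1/2) log( det(A_{xy}Σ_x^sA_{xy}ᵀ + B_xΣ_uB_xᵀ) / det(A_{xy}Σ_x^sA_{xy}ᵀ) )`,
provided `A_{xy} Σ_x^s A_{xy}ᵀ` is invertible. -/
theorem information_transfer_u_to_x {p q r : ℕ}
    (Ax : Matrix (Fin p) (Fin p) ℝ) (Axy : Matrix (Fin p) (Fin q) ℝ)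
    (Bx : Matrix (Fin p) (Fin r) ℝ)
    (Sx : Matrix (Fin p) (Fin p) ℝ) (Sxy : Matrix (Fin p) (Fin q) ℝ)
    (Sy : Matrix (Fin q) (Fin q) ℝ) (Su : Matrix (Fin r) (Fin r) ℝ)
    (hS : (Matrix.fromBlocks Sx Sxy Sxyᵀ Sy).PosDef) (hSu : Su.PosDef)
    (hinv : IsUnit (Axy * (Sy - Sxyᵀ * Sx⁻¹ * Sxy) * Axyᵀ).det) :
    -- the covariance of x' and the cross covariance of (x', x)
    (Ax * Sx * Axᵀ + Ax * Sxy * Axyᵀ + Axy * Sxyᵀ * Axᵀ + Axy * Sy * Axyᵀ + Bx * Su * Bxᵀ)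
        - (Ax * Sx + Axy * Sxyᵀ) * Sx⁻¹ * (Ax * Sx + Axy * Sxyᵀ)ᵀ
      = Axy * (Sy - Sxyᵀ * Sx⁻¹ * Sxy) * Axyᵀ + Bx * Su * Bxᵀ
    ∧ (Ax * Sx * Axᵀ + Ax * Sxy * Axyᵀ + Axy * Sxyᵀ * Axᵀ + Axy * Sy * Axyᵀ)
        - (Ax * Sx + Axy * Sxyᵀ) * Sx⁻¹ * (Ax * Sx + Axy * Sxyᵀ)ᵀ
      = Axy * (Sy - Sxyᵀ * Sx⁻¹ * Sxy) * Axyᵀ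
    ∧ gaussEntropy p (Axy * (Sy - Sxyᵀ * Sx⁻¹ * Sxy) * Axyᵀ + Bx * Su * Bxᵀ)
        - gaussEntropy p (Axy * (Sy - Sxyᵀ * Sx⁻¹ * Sxy) * Axyᵀ)
      = (1 / 2) * Real.log
          ((Axy * (Sy - Sxyᵀ * Sx⁻¹ * Sxy) * Axyᵀ + Bx * Su * Bxᵀ).det /
            (Axy * (Sy - Sxyᵀ * Sx⁻¹ * Sxy) * Axyᵀ).det) := by
  have hSx : Sx.PosDef := hS.of_fromBlocks₁₁
  have hcond := sub_mul_inv_mul_transpose_eq_mul_schur_mul (isHermitian_iff_isSymm.mp hSx.isHermitian)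
    hSx.det_pos.ne'.isUnit Sxy Sy Ax Axy
  have hfrozen : (Axy * (Sy - Sxyᵀ * Sx⁻¹ * Sxy) * Axyᵀ).PosDef :=
    (hS.posSemidef_schur₁₁.mul_mul_conjTranspose_same Axy).posDef_iff_det_ne_zero.mpr
      hinv.ne_zero
  have hfull : (Axy * (Sy - Sxyᵀ * Sx⁻¹ * Sxy) * Axyᵀ + Bx * Su * Bxᵀ).PosDef :=
    hfrozen.add_posSemidef (hSu.posSemidef.mul_mul_conjTranspose_same Bx)
  exact ⟨by rw [add_sub_right_comm, hcond], hcond,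
    gaussEntropy_sub_gaussEntropy hfull.det_pos.ne' hfrozen.det_pos.ne'⟩
end

section
/- For a stable scalar discrete-time closed loop, the integral over θ ∈ [−1/2, 1/2] of log |S(e^{j2πθ})|, where S(λ) = det(λI − A) / det(λI − A − BC) is the sensitivity function, equals the sum of log |λ_i| over eigenvalues λ_i of A with |λ_i| > 1 (assuming A + BC has all eigenvalues inside the unit disk and A has no eigenvalues on the unit circle). -/
/-!
On the unit circle `S = χ_A / χ_{A+BC}` with both characteristic polynomials nonvanishing there,
so the integral of `log |S|` is the difference of the logarithmic Mahler measures of `χ_A` and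
`χ_{A+BC}`. By Jensen's formula the logarithmic Mahler measure of a monic polynomial is
`∑ log⁺ |μ|` over its roots, which vanishes for the stable polynomial `χ_{A+BC}`.
-/

open Matrix Polynomial

/-- The sensitivity function `S(λ) = det(λI − A)/det(λI − A − BC)` of the
scalar discrete-time loop. -/
noncomputable def sensitivity {N : ℕ} (A : Matrix (Fin N) (Fin N) ℝ)
    (B : Matrix (Fin N) (Fin 1) ℝ) (C : Matrix (Fin 1) (Fin N) ℝ) (lam : ℂ) : ℂ :=
  (lam • (1 : Matrix (Fin N) (Fin N) ℂ) - A.map (Complex.ofReal)).det /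
    (lam • (1 : Matrix (Fin N) (Fin N) ℂ) - (A + B * C).map (Complex.ofReal)).det

open Metric Real

theorem intervalIntegral_comp_exp_two_pi_mul_I_eq_circleAverage {E : Type*}
    [NormedAddCommGroup E] [NormedSpace ℝ E] (f : ℂ → E) :
    ∫ θ in (-(1 : ℝ) / 2)..(1 / 2), f (Complex.exp (2 * π * Complex.I * θ)) =
      circleAverage f 0 1 := by
  have h2π : 2 * π ≠ 0 := by positivity
  rw [circleAverage_eq_integral_add (-π), intervalIntegral.integral_comp_add_right
    (fun θ => f (circleMap 0 1 θ)), zero_add, show -π = 2 * π * (-1 / 2) by ring,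
    show 2 * π + 2 * π * (-1 / 2) = 2 * π * (1 / 2) by ring,
    ← intervalIntegral.integral_comp_mul_left (fun θ => f (circleMap 0 1 θ)) h2π]
  congr with θ
  rw [circleMap_zero, Complex.ofReal_one, one_mul]
  congr 2
  push_cast
  ring

theorem Matrix.det_smul_one_sub_map {n R S : Type*} [Fintype n] [DecidableEq n] [CommRing R]
    [CommRing S] (M : Matrix n n R) (f : R →+* S) (s : S) :
    (s • (1 : Matrix n n S) - M.map f).det = (M.charpoly.map f).eval s := by
  rw [← charpoly_map, eval_charpoly, smul_one_eq_diagonal]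
  rfl

theorem sensitivity_eq_div_eval {N : ℕ} (A : Matrix (Fin N) (Fin N) ℝ)
    (B : Matrix (Fin N) (Fin 1) ℝ) (C : Matrix (Fin 1) (Fin N) ℝ) (lam : ℂ) :
    sensitivity A B C lam = (A.charpoly.map (algebraMap ℝ ℂ)).eval lam /
      ((A + B * C).charpoly.map (algebraMap ℝ ℂ)).eval lam := by
  simp only [sensitivity]
  rw [← det_smul_one_sub_map, ← det_smul_one_sub_map]
  rfl

theorem Polynomial.eval_ne_zero_of_norm_roots_ne_one {p : ℂ[X]} (hp : p ≠ 0)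
    (hroots : ∀ μ ∈ p.roots, ‖μ‖ ≠ 1) {z : ℂ} (hz : ‖z‖ = 1) : p.eval z ≠ 0 :=
  fun h => hroots z ((mem_roots hp).2 h) hz

theorem log_norm_sensitivity_eq_sub {N : ℕ} {A : Matrix (Fin N) (Fin N) ℝ}
    {B : Matrix (Fin N) (Fin 1) ℝ} {C : Matrix (Fin 1) (Fin N) ℝ}
    (hA : ∀ μ ∈ A.charpoly.aroots ℂ, ‖μ‖ ≠ 1)
    (hAB : ∀ μ ∈ (A + B * C).charpoly.aroots ℂ, ‖μ‖ ≠ 1) {z : ℂ} (hz : ‖z‖ = 1) :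
    log ‖sensitivity A B C z‖ = log ‖(A.charpoly.map (algebraMap ℝ ℂ)).eval z‖ -
      log ‖((A + B * C).charpoly.map (algebraMap ℝ ℂ)).eval z‖ := by
  rw [sensitivity_eq_div_eval, norm_div]
  exact log_div
    (norm_ne_zero_iff.2 (eval_ne_zero_of_norm_roots_ne_one (A.charpoly_monic.map _).ne_zero hA hz))
    (norm_ne_zero_iff.2
      (eval_ne_zero_of_norm_roots_ne_one ((A + B * C).charpoly_monic.map _).ne_zero hAB hz))

theorem Polynomial.Monic.logMahlerMeasure_eq_sum_posLog_roots {p : ℂ[X]} (hp : p.Monic) :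
    p.logMahlerMeasure = (p.roots.map fun μ => log⁺ ‖μ‖).sum := by
  rw [logMahlerMeasure_eq_log_leadingCoeff_add_sum_log_roots, hp.leadingCoeff, norm_one, log_one,
    zero_add]

theorem Polynomial.Monic.logMahlerMeasure_eq_zero_of_norm_roots_le_one {p : ℂ[X]} (hp : p.Monic)
    (hroots : ∀ μ ∈ p.roots, ‖μ‖ ≤ 1) : p.logMahlerMeasure = 0 := by
  rw [hp.logMahlerMeasure_eq_sum_posLog_roots]
  refine Multiset.sum_eq_zero fun x hx => ?_
  obtain ⟨μ, hμ, rfl⟩ := Multiset.mem_map.1 hx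
  exact (posLog_eq_zero_iff _).2 (by rw [abs_norm]; exact hroots μ hμ)

theorem Real.posLog_eq_ite {x : ℝ} (hx : 0 ≤ x) : log⁺ x = if 1 < x then log x else 0 := by
  split_ifs with h
  · exact posLog_eq_log (by rw [abs_of_nonneg hx]; exact h.le)
  · exact (posLog_eq_zero_iff x).2 (by rw [abs_of_nonneg hx]; exact not_lt.1 h)

/-- Discrete-time Bode integral formula: if the closed loop `A + BC` has all
eigenvalues inside the unit disk and `A` has no eigenvalues on the unit
circle, then `∫_{-1/2}^{1/2} log |S(e^{j2πθ})| dθ = Σ_{|λ_i(A)|>1} log |λ_i(A)|`. -/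
theorem bode_integral_formula {N : ℕ} (A : Matrix (Fin N) (Fin N) ℝ)
    (B : Matrix (Fin N) (Fin 1) ℝ) (C : Matrix (Fin 1) (Fin N) ℝ)
    (hstab : ∀ μ ∈ (A + B * C).charpoly.aroots ℂ, ‖μ‖ < 1)
    (hcirc : ∀ μ ∈ A.charpoly.aroots ℂ, ‖μ‖ ≠ 1) :
    (∫ θ in (-(1 : ℝ) / 2)..(1 / 2),
        Real.log ‖sensitivity A B C (Complex.exp (2 * Real.pi * Complex.I * θ))‖)
      = ((A.charpoly.aroots ℂ).map
          (fun μ => if 1 < ‖μ‖ then Real.log ‖μ‖ else 0)).sum := by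
  set pA := A.charpoly.map (algebraMap ℝ ℂ)
  set pAB := (A + B * C).charpoly.map (algebraMap ℝ ℂ)
  have hlog : Set.EqOn (fun z => log ‖sensitivity A B C z‖)
      (fun z => log ‖pA.eval z‖ - log ‖pAB.eval z‖) (sphere 0 |1|) := fun z hz =>
    log_norm_sensitivity_eq_sub hcirc (fun μ hμ => (hstab μ hμ).ne) (by simpa using hz)
  rw [intervalIntegral_comp_exp_two_pi_mul_I_eq_circleAverage (log ‖sensitivity A B C ·‖),
    circleAverage_congr_sphere hlog,
    circleAverage_fun_sub ((circleIntegrable_def _ _ _).2 (intervalIntegrable_mahlerMeasure pA))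
      ((circleIntegrable_def _ _ _).2 (intervalIntegrable_mahlerMeasure pAB)),
    ← logMahlerMeasure_def, ← logMahlerMeasure_def,
    (A.charpoly_monic.map _).logMahlerMeasure_eq_sum_posLog_roots,
    ((A + B * C).charpoly_monic.map _).logMahlerMeasure_eq_zero_of_norm_roots_le_one
      fun μ hμ => (hstab μ hμ).le, sub_zero]
  exact congrArg Multiset.sum (Multiset.map_congr rfl fun μ _ => posLog_eq_ite (norm_nonneg μ))
end

section
/- For jointly Gaussian vectors, the one-step information transfer from x₁ to y, with x₂ the remaining states, is [T_{x₁→y}] = (1/2) log( det(A_{yx} Σ_y^s A_{yx}^⊤ + σ²I) / det(A_{yx₂}(Σ_y^s)_{yx₂} A_{yx₂}^⊤ + σ²I) ), where Σ_y^s = Σ_x − Σ_{xy} Σ_y^{-1} Σ_{xy}^⊤ and (Σ_y^s)_{yx₂} = Σ_{x₂} − Σ_{x₂y} Σ_y^{-1} Σ_{x₂y}^⊤. -/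
open Matrix

namespace Matrix

variable {l m n : Type*} [Fintype n]

theorem submatrix_sub_mul_inv_mul_transpose [DecidableEq n] {R : Type*} [CommRing R]
    (A : Matrix m m R) (B : Matrix m n R) (D : Matrix n n R) (e : l → m) :
    (A - B * D⁻¹ * Bᵀ).submatrix e e
      = A.submatrix e e - B.submatrix e id * D⁻¹ * (B.submatrix e id)ᵀ := by
  ext i j
  simp [mul_apply]

variable [Fintype m]

theorem PosDef.sub_mul_inv_mul_transpose_posSemidef [DecidableEq n] {A : Matrix m m ℝ}
    {B : Matrix m n ℝ} {D : Matrix n n ℝ} (h : (fromBlocks A B Bᵀ D).PosDef) :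
    (A - B * D⁻¹ * Bᵀ).PosSemidef := by
  have hD : D.PosDef := h.submatrix (Sum.inr_injective (α := m))
  let := hD.isUnit.invertible
  rw [← conjTranspose_eq_transpose_of_trivial] at h ⊢
  exact (PosDef.fromBlocks₂₂ A B hD).mp h.posSemidef

theorem PosSemidef.mul_mul_transpose_add_smul_one_posDef [DecidableEq m] {M : Matrix n n ℝ}
    (hM : M.PosSemidef) (B : Matrix m n ℝ) {c : ℝ} (hc : 0 < c) :
    (B * M * Bᵀ + c • (1 : Matrix m m ℝ)).PosDef := by
  refine PosDef.posSemidef_add ?_ (PosDef.one.smul hc)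
  simpa only [conjTranspose_eq_transpose_of_trivial] using hM.mul_mul_conjTranspose_same B

end Matrix

theorem information_transfer_x1_to_y_general {p₁ p₂ q : ℕ}
    (Ayx : Matrix (Fin q) (Fin p₁ ⊕ Fin p₂) ℝ)
    (Sx : Matrix (Fin p₁ ⊕ Fin p₂) (Fin p₁ ⊕ Fin p₂) ℝ)
    (Sxy : Matrix (Fin p₁ ⊕ Fin p₂) (Fin q) ℝ)
    (Sy : Matrix (Fin q) (Fin q) ℝ) (σ : ℝ) (hσ : 0 < σ)
    (hS : (Matrix.fromBlocks Sx Sxy Sxyᵀ Sy).PosDef)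
    -- the blocks associated with the sub-state `x₂`
    (Ayx₂ : Matrix (Fin q) (Fin p₂) ℝ)
    (Sx₂ : Matrix (Fin p₂) (Fin p₂) ℝ) (hSx₂ : Sx₂ = Sx.submatrix Sum.inr Sum.inr)
    (Sx₂y : Matrix (Fin p₂) (Fin q) ℝ) (hSx₂y : Sx₂y = Sxy.submatrix Sum.inr id) :
    gaussEntropy q (Ayx * (Sx - Sxy * Sy⁻¹ * Sxyᵀ) * Ayxᵀ + σ ^ 2 • (1 : Matrix (Fin q) (Fin q) ℝ))
      - gaussEntropy q (Ayx₂ * (Sx₂ - Sx₂y * Sy⁻¹ * Sx₂yᵀ) * Ayx₂ᵀ + σ ^ 2 • (1 : Matrix (Fin q) (Fin q) ℝ))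
    = (1 / 2) * Real.log
        ((Ayx * (Sx - Sxy * Sy⁻¹ * Sxyᵀ) * Ayxᵀ + σ ^ 2 • (1 : Matrix (Fin q) (Fin q) ℝ)).det /
          (Ayx₂ * (Sx₂ - Sx₂y * Sy⁻¹ * Sx₂yᵀ) * Ayx₂ᵀ + σ ^ 2 • (1 : Matrix (Fin q) (Fin q) ℝ)).det) := by
  have hσ₂ : 0 < σ ^ 2 := by positivity
  have hSchur := hS.sub_mul_inv_mul_transpose_posSemidef
  have hSchur₂ : (Sx₂ - Sx₂y * Sy⁻¹ * Sx₂yᵀ).PosSemidef := by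
    rw [hSx₂, hSx₂y, ← submatrix_sub_mul_inv_mul_transpose]
    exact hSchur.submatrix Sum.inr
  exact gaussEntropy_sub_gaussEntropy
    (hSchur.mul_mul_transpose_add_smul_one_posDef Ayx hσ₂).det_pos.ne'
    (hSchur₂.mul_mul_transpose_add_smul_one_posDef Ayx₂ hσ₂).det_pos.ne'

/-- One-step information transfer from `x₁` to `y` for the system
`z(t+1) = A z(t) + σ ξ(t)` with `z = (x₁, x₂, y)` jointly Gaussian with
positive definite covariance.  The transfer is `H(y'|y) − H_{x̸₁}(y'|y)`,
with Gaussian conditional covariances `A_{yx} Σ_y^s A_{yx}ᵀ + σ²I` and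
`A_{yx₂} (Σ_y^s)_{yx₂} A_{yx₂}ᵀ + σ²I`, where
`Σ_y^s = Σ_x − Σ_{xy} Σ_y⁻¹ Σ_{xy}ᵀ` (Schur complement over `x = (x₁,x₂)`)
and `(Σ_y^s)_{yx₂} = Σ_{x₂} − Σ_{x₂y} Σ_y⁻¹ Σ_{x₂y}ᵀ`.  The transfer equals
`(1/2) log(det(A_{yx} Σ_y^s A_{yx}ᵀ + σ²I) / det(A_{yx₂}(Σ_y^s)_{yx₂}A_{yx₂}ᵀ + σ²I))`. -/
theorem information_transfer_x1_to_y {p₁ p₂ q : ℕ}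
    (Ayx : Matrix (Fin q) (Fin p₁ ⊕ Fin p₂) ℝ)
    (Sx : Matrix (Fin p₁ ⊕ Fin p₂) (Fin p₁ ⊕ Fin p₂) ℝ)
    (Sxy : Matrix (Fin p₁ ⊕ Fin p₂) (Fin q) ℝ)
    (Sy : Matrix (Fin q) (Fin q) ℝ) (σ : ℝ) (hσ : 0 < σ)
    (hS : (Matrix.fromBlocks Sx Sxy Sxyᵀ Sy).PosDef)
    -- the blocks associated with the sub-state `x₂`
    (Ayx₂ : Matrix (Fin q) (Fin p₂) ℝ) (hA₂ : Ayx₂ = Ayx.submatrix id Sum.inr)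
    (Sx₂ : Matrix (Fin p₂) (Fin p₂) ℝ) (hSx₂ : Sx₂ = Sx.submatrix Sum.inr Sum.inr)
    (Sx₂y : Matrix (Fin p₂) (Fin q) ℝ) (hSx₂y : Sx₂y = Sxy.submatrix Sum.inr id) :
    gaussEntropy q (Ayx * (Sx - Sxy * Sy⁻¹ * Sxyᵀ) * Ayxᵀ + σ ^ 2 • (1 : Matrix (Fin q) (Fin q) ℝ))
      - gaussEntropy q (Ayx₂ * (Sx₂ - Sx₂y * Sy⁻¹ * Sx₂yᵀ) * Ayx₂ᵀ + σ ^ 2 • (1 : Matrix (Fin q) (Fin q) ℝ))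
    = (1 / 2) * Real.log
        ((Ayx * (Sx - Sxy * Sy⁻¹ * Sxyᵀ) * Ayxᵀ + σ ^ 2 • (1 : Matrix (Fin q) (Fin q) ℝ)).det /
          (Ayx₂ * (Sx₂ - Sx₂y * Sy⁻¹ * Sx₂yᵀ) * Ayx₂ᵀ + σ ^ 2 • (1 : Matrix (Fin q) (Fin q) ℝ)).det) :=
  information_transfer_x1_to_y_general Ayx Sx Sxy Sy σ hσ hS Ayx₂ Sx₂ hSx₂ Sx₂y hSx₂y
end
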